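/- arXiv:1612.04267 — 2 statements merged into one kernel-verified Lean document; each statement's English description precedes it below -/
import Mathlib

section
/- Let X be a topological space, A ⊆ B a closed embedding with B and X normal spaces, and consider a pushout square with A → X any continuous map and Y = B ⊔_A X the pushout (adjunction space). Then Y is normal. -/
/-!
Given disjoint closed sets `s, t` of `Y = B ⊔_A X`, it suffices to find a continuous
`h : Y → ℝ` equal to `0` on `s` and to `1` on `t`. Urysohn's lemma in `X` gives such a
function `u` on the preimages of `s` and `t` in `X`. The function `u ∘ g` on `A` is then
extended to `B` by Tietze, keeping the values `0` and `1` on the preimages of `s` and `t`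
in `B`: this is possible because these values are compatible with `u ∘ g` on `A` and all
three sets are closed. The two functions glue to `h`.
-/

/-- The relation on `B ⊕ X` identifying `f a` with `g a`, whose quotient is the
adjunction space (pushout) `B ⊔_A X`. -/
def pushoutRel {A B X : Type*} (f : A → B) (g : A → X) : (B ⊕ X) → (B ⊕ X) → Prop :=
  fun p q => ∃ a : A, p = Sum.inl (f a) ∧ q = Sum.inr (g a)

open Set Topology

universe u v

lemma normalSpace_of_exists_continuous_zero_one {Y : Type*} [TopologicalSpace Y]
    (h : ∀ s t : Set Y, IsClosed s → IsClosed t → Disjoint s t →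
      ∃ φ : C(Y, ℝ), EqOn φ 0 s ∧ EqOn φ 1 t) :
    NormalSpace Y := by
  refine ⟨fun s t hs ht hst => ?_⟩
  obtain ⟨φ, hφs, hφt⟩ := h s t hs ht hst
  refine ⟨φ ⁻¹' Iio (1 / 2), φ ⁻¹' Ioi (1 / 2), isOpen_Iio.preimage φ.continuous,
    isOpen_Ioi.preimage φ.continuous, fun y hy => ?_, fun y hy => ?_, ?_⟩
  · norm_num [hφs hy]
  · norm_num [hφt hy]
  · exact ((Iio_disjoint_Ici le_rfl).mono_right Ioi_subset_Ici_self).preimage φ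

lemma ContinuousMap.exists_eqOn_of_isClosed_union {B : Type u} {Z : Type v}
    [TopologicalSpace B] [NormalSpace B] [TopologicalSpace Z] [TietzeExtension.{u, v} Z]
    {C D : Set B} (hC : IsClosed C) (hD : IsClosed D) (w p : C(B, Z)) (hwp : EqOn w p (C ∩ D)) :
    ∃ v : C(B, Z), EqOn v w C ∧ EqOn v p D := by
  classical
  have hθ : ContinuousOn (C.piecewise w p) (C ∪ D) := by
    refine ContinuousOn.union_of_isClosed ?_ ?_ hC hD
    · exact w.continuous.continuousOn.congr fun b hb => C.piecewise_eq_of_mem _ _ hb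
    · refine p.continuous.continuousOn.congr fun b hb => ?_
      by_cases hbC : b ∈ C
      · rw [C.piecewise_eq_of_mem _ _ hbC, hwp ⟨hbC, hb⟩]
      · exact C.piecewise_eq_of_notMem _ _ hbC
  obtain ⟨v, hv⟩ := ContinuousMap.exists_restrict_eq (hC.union hD)
    ⟨_, continuousOn_iff_continuous_domRestrict.mp hθ⟩
  have hvθ : EqOn v (C.piecewise w p) (C ∪ D) := fun b hb => congr($hv ⟨b, hb⟩)
  refine ⟨v, fun b hb => ?_, fun b hb => ?_⟩
  · rw [hvθ (Or.inl hb), C.piecewise_eq_of_mem _ _ hb]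
  · by_cases hbC : b ∈ C
    · rw [hvθ (Or.inl hbC), C.piecewise_eq_of_mem _ _ hbC, hwp ⟨hbC, hb⟩]
    · rw [hvθ (Or.inr hb), C.piecewise_eq_of_notMem _ _ hbC]

lemma ContinuousMap.exists_extension_eqOn_zero_one {A B : Type*} [TopologicalSpace A]
    [TopologicalSpace B] [NormalSpace B] {e : A → B} (he : IsClosedEmbedding e)
    (φ : C(A, ℝ)) {s t : Set B} (hs : IsClosed s) (ht : IsClosed t) (hst : Disjoint s t)
    (hφs : EqOn φ 0 (e ⁻¹' s)) (hφt : EqOn φ 1 (e ⁻¹' t)) :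
    ∃ v : C(B, ℝ), v ∘ e = φ ∧ EqOn v 0 s ∧ EqOn v 1 t := by
  obtain ⟨w, hw⟩ := φ.exists_extension' he
  obtain ⟨p, hps, hpt, -⟩ := exists_continuous_zero_one_of_isClosed hs ht hst
  have hwp : EqOn w p (range e ∩ (s ∪ t)) := by
    rintro _ ⟨⟨a, rfl⟩, ha | ha⟩
    · exact (congrFun hw a).trans ((hφs ha).trans (hps ha).symm)
    · exact (congrFun hw a).trans ((hφt ha).trans (hpt ha).symm)
  obtain ⟨v, hvw, hvp⟩ := w.exists_eqOn_of_isClosed_union he.isClosed_range (hs.union ht) p hwp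
  refine ⟨v, ?_, fun b hb => (hvp (Or.inl hb)).trans (hps hb),
    fun b hb => (hvp (Or.inr hb)).trans (hpt hb)⟩
  rw [← hw]
  exact funext fun a => hvw (mem_range_self a)

section Pushout

variable {A B X : Type*} (f : A → B) (g : A → X)

def pushoutInl (b : B) : Quot (pushoutRel f g) := Quot.mk _ (Sum.inl b)

def pushoutInr (x : X) : Quot (pushoutRel f g) := Quot.mk _ (Sum.inr x)

lemma continuous_pushoutInl [TopologicalSpace B] [TopologicalSpace X] :
    Continuous (pushoutInl f g) :=
  continuous_quot_mk.comp continuous_inl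

lemma continuous_pushoutInr [TopologicalSpace B] [TopologicalSpace X] :
    Continuous (pushoutInr f g) :=
  continuous_quot_mk.comp continuous_inr

lemma pushoutInl_eq_pushoutInr (a : A) : pushoutInl f g (f a) = pushoutInr f g (g a) :=
  Quot.sound ⟨a, rfl, rfl⟩

variable [TopologicalSpace B] [TopologicalSpace X] {Z : Type*} [TopologicalSpace Z] {f g}

def pushoutLift (v : C(B, Z)) (u : C(X, Z)) (h : v ∘ f = u ∘ g) :
    C(Quot (pushoutRel f g), Z) where
  toFun := Quot.lift (Sum.elim v u) (by rintro _ _ ⟨a, rfl, rfl⟩; exact congrFun h a)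
  continuous_toFun := continuous_quot_lift _ (v.continuous.sumElim u.continuous)

lemma eqOn_pushoutLift {v : C(B, Z)} {u : C(X, Z)} {h : v ∘ f = u ∘ g}
    {s : Set (Quot (pushoutRel f g))} {c : Z}
    (hv : EqOn v (fun _ => c) (pushoutInl f g ⁻¹' s))
    (hu : EqOn u (fun _ => c) (pushoutInr f g ⁻¹' s)) :
    EqOn (pushoutLift v u h) (fun _ => c) s := by
  rintro ⟨b | x⟩ hy
  · exact hv hy
  · exact hu hy

end Pushout

/-- Let `f : A → B` be a closed embedding with `B` and `X` normal, and let `g : A → X` be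
any continuous map.  Then the pushout (adjunction space) `Y = B ⊔_A X`, i.e. the quotient
of `B ⊕ X` identifying `a ∈ A` with its image in `X`, is normal. -/
theorem pushout_normal
    {A B X : Type*} [TopologicalSpace A] [TopologicalSpace B] [TopologicalSpace X]
    [NormalSpace B] [NormalSpace X]
    (f : A → B) (hf : Topology.IsClosedEmbedding f) (g : A → X) (hg : Continuous g) :
    NormalSpace (Quot (pushoutRel f g)) := by
  refine normalSpace_of_exists_continuous_zero_one fun s t hs ht hst => ?_
  have isClosed_inl {r} (hr : IsClosed r) := hr.preimage (continuous_pushoutInl f g)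
  have isClosed_inr {r} (hr : IsClosed r) := hr.preimage (continuous_pushoutInr f g)
  obtain ⟨u, hus, hut, -⟩ := exists_continuous_zero_one_of_isClosed (isClosed_inr hs)
    (isClosed_inr ht) (hst.preimage _)
  obtain ⟨v, hvf, hvs, hvt⟩ := (u.comp ⟨g, hg⟩).exists_extension_eqOn_zero_one hf
    (isClosed_inl hs) (isClosed_inl ht) (hst.preimage _)
    (fun a ha => hus (show pushoutInr f g (g a) ∈ s from pushoutInl_eq_pushoutInr f g a ▸ ha))
    (fun a ha => hut (show pushoutInr f g (g a) ∈ t from pushoutInl_eq_pushoutInr f g a ▸ ha))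
  exact ⟨pushoutLift v u hvf, eqOn_pushoutLift hvs hus, eqOn_pushoutLift hvt hut⟩
end

section
/- Let G be a topological group acting continuously on a topological space X. Then the induced action of π₀(G) on π₀(X) is well-defined, and the map π₀(q) : π₀(X) → π₀(X/G) induced by the quotient map descends to a map π₀(X)/π₀(G) → π₀(X/G). If moreover the quotient map q : X → X/G is a Serre fibration, this descended map is a bijection. -/
/-!
A path in `G` and a path in `X` multiply to a path in `X`, so the action descends to path
components; paths in `X` project to paths in `X/G`, and orbit-equivalent points have the same
image, so `π₀(q)` is constant on `π₀(G)`-orbits. Surjectivity is automatic since `q` is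
surjective. For injectivity, lift a path from `q x` to `q y` with the homotopy lifting property
for the point (the `0`-cube): its endpoint lies over `q y`, i.e. equals `g • y`, so
`g⁻¹ • x` is joined to `y`.
-/

/-- A map is a Serre fibration if it has the homotopy lifting property with respect to all
cubes (equivalently, all CW pairs / disks). -/
def IsSerreFibration {A B : Type*} [TopologicalSpace A] [TopologicalSpace B]
    (q : A → B) : Prop :=
  ∀ (n : ℕ) (F : C((Fin n → unitInterval) × unitInterval, B))
    (g : C((Fin n → unitInterval), A)),
    (∀ y, q (g y) = F (y, 0)) →
    ∃ L : C((Fin n → unitInterval) × unitInterval, A),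
      (∀ z, q (L z) = F z) ∧ ∀ y, L (y, 0) = g y

/-- The relation on `X` whose quotient is `π₀(X)/π₀(G)`. -/
def pi0OrbitRel (G : Type*) {X : Type*} [TopologicalSpace X] [Group G] [MulAction G X]
    (x y : X) : Prop :=
  ∃ g : G, Joined (g • x) y

theorem Joined.smul {G X : Type*} [TopologicalSpace G] [TopologicalSpace X] [SMul G X]
    [ContinuousSMul G X] {g g' : G} {x x' : X} (hg : Joined g g') (hx : Joined x x') :
    Joined (g • x) (g' • x') := by
  obtain ⟨γ⟩ := hg
  obtain ⟨δ⟩ := hx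
  exact ⟨⟨⟨fun t => γ t • δ t, by fun_prop⟩, by simp, by simp⟩⟩

theorem IsSerreFibration.exists_joined_lift {A B : Type*} [TopologicalSpace A]
    [TopologicalSpace B] {q : A → B} (hq : IsSerreFibration q) {a : A} {b : B}
    (h : Joined (q a) b) : ∃ a', Joined a a' ∧ q a' = b := by
  obtain ⟨γ⟩ := h
  obtain ⟨L, hLq, hL₀⟩ := hq 0 ⟨fun p => γ p.2, by fun_prop⟩ ⟨fun _ => a, continuous_const⟩
    (fun _ => by simp)
  let c : Fin 0 → unitInterval := Fin.elim0
  refine ⟨L (c, 1), ⟨⟨⟨fun t => L (c, t), by fun_prop⟩, ?_, rfl⟩⟩, ?_⟩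
  · simpa using hL₀ c
  · simpa using hLq (c, 1)

section OrbitQuotient

variable {G X : Type*} [Group G] [TopologicalSpace X] [MulAction G X]

local notation "q" => Quotient.mk (MulAction.orbitRel G X)

theorem joined_mk_of_pi0OrbitRel {x y : X} (h : pi0OrbitRel G x y) : Joined (q x) (q y) := by
  obtain ⟨g, ⟨γ⟩⟩ := h
  have hgx : q (g • x) = q x := Quotient.sound (MulAction.mem_orbit x g)
  exact hgx ▸ ⟨γ.map continuous_quotient_mk'⟩

theorem pi0OrbitRel_of_joined_mk [ContinuousConstSMul G X] (hq : IsSerreFibration q) {x y : X}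
    (h : Joined (q x) (q y)) : pi0OrbitRel G x y := by
  obtain ⟨x', hxx', hx'y⟩ := hq.exists_joined_lift h
  obtain ⟨g, rfl⟩ : x' ∈ MulAction.orbit G y := Quotient.exact' hx'y
  refine ⟨g⁻¹, ?_⟩
  simpa using hxx'.map (continuous_const_smul g⁻¹)

end OrbitQuotient

theorem pi0_quotient_descends_general
    {G : Type*} [Group G] [TopologicalSpace G]
    {X : Type*} [TopologicalSpace X] [MulAction G X] [ContinuousSMul G X] :
    (∃ a : ZerothHomotopy G → ZerothHomotopy X → ZerothHomotopy X,
      ∀ (g : G) (x : X), a (Quotient.mk (pathSetoid G) g) (Quotient.mk (pathSetoid X) x)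
        = Quotient.mk (pathSetoid X) (g • x)) ∧
    ∃ φ : Quot (pi0OrbitRel G (X := X)) →
        ZerothHomotopy (Quotient (MulAction.orbitRel G X)),
      (∀ x : X, φ (Quot.mk _ x) =
        Quotient.mk (pathSetoid (Quotient (MulAction.orbitRel G X)))
          (Quotient.mk (MulAction.orbitRel G X) x)) ∧
      (IsSerreFibration (Quotient.mk (MulAction.orbitRel G X)) → Function.Bijective φ) := by
  refine ⟨⟨Quotient.map₂ (· • ·) fun _ _ hg _ _ hx => hg.smul hx, fun _ _ => rfl⟩,
    Quot.lift (fun x => Quotient.mk _ (Quotient.mk _ x))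
      fun _ _ h => Quotient.sound (joined_mk_of_pi0OrbitRel h),
    fun _ => rfl, fun hq => ⟨?_, ?_⟩⟩
  · rintro ⟨x⟩ ⟨y⟩ h
    exact Quot.sound (pi0OrbitRel_of_joined_mk hq (Quotient.exact h))
  · rintro ⟨⟨x⟩⟩
    exact ⟨Quot.mk _ x, rfl⟩

/-- Let `G` be a topological group acting continuously on a topological space `X`.  Then
the induced `π₀(G)`-action on `π₀(X)` is well-defined, and the map
`π₀(q) : π₀(X) → π₀(X/G)` induced by the quotient map descends to a map
`π₀(X)/π₀(G) → π₀(X/G)`.  If moreover `q : X → X/G` is a Serre fibration, this descended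
map is a bijection. -/
theorem pi0_quotient_descends
    {G : Type*} [Group G] [TopologicalSpace G] [IsTopologicalGroup G]
    {X : Type*} [TopologicalSpace X] [MulAction G X] [ContinuousSMul G X] :
    (∃ a : ZerothHomotopy G → ZerothHomotopy X → ZerothHomotopy X,
      ∀ (g : G) (x : X), a (Quotient.mk (pathSetoid G) g) (Quotient.mk (pathSetoid X) x)
        = Quotient.mk (pathSetoid X) (g • x)) ∧
    ∃ φ : Quot (pi0OrbitRel G (X := X)) →
        ZerothHomotopy (Quotient (MulAction.orbitRel G X)),
      (∀ x : X, φ (Quot.mk _ x) =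
        Quotient.mk (pathSetoid (Quotient (MulAction.orbitRel G X)))
          (Quotient.mk (MulAction.orbitRel G X) x)) ∧
      (IsSerreFibration (Quotient.mk (MulAction.orbitRel G X)) → Function.Bijective φ) :=
  pi0_quotient_descends_general
end
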